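/- arXiv:2510.06947 — 2 statements merged into one kernel-verified Lean document; each statement's English description precedes it below -/
import Mathlib

section
/- For even n > 2 and 0 ≤ i ≤ n with i ≠ n/2, the Dicke state |D_n^i⟩ (the normalized uniform superposition of all n-qubit computational basis states with exactly i ones) satisfies: the probability of measuring |1⟩ at any fixed qubit position p equals i/n. Consequently, this probability is < 1/2 when i < n/2 and > 1/2 when i > n/2, so Dicke states solve the density classification task. -/
/-!
The amplitudes of `|D_n^i⟩` are `1/√C(n,i)` on the `C(n,i)` basis states of weight `i`, so the
probability of reading `1` at qubit `p` is the fraction of weight-`i` strings with a one at `p`.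
Dropping that one leaves an arbitrary `(i-1)`-subset of the remaining `n-1` positions, and
`n · C(n-1, i-1) = i · C(n,i)` turns the fraction into `i/n`.
-/

open Finset

noncomputable def dickeState (α : Type*) [Fintype α] (i : ℕ) (b : α → Bool) : ℂ :=
  if #{j | b j = true} = i then (1 / Real.sqrt ((Fintype.card α).choose i) : ℂ) else 0

section

variable {α : Type*} [Fintype α] [DecidableEq α]

theorem card_apply_eq_true_and_card_eq_succ (p : α) (k : ℕ) :
    #{b : α → Bool | b p = true ∧ #{j | b j = true} = k + 1} =
      (Fintype.card α - 1).choose k := by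
  rw [← card_univ, ← card_erase_of_mem (mem_univ p), ← card_powersetCard]
  refine card_nbij' (fun b => ({j | b j = true} : Finset α).erase p)
    (fun s j => j = p ∨ j ∈ s) ?_ ?_ ?_ ?_
  · intro b hb
    simp only [mem_coe, mem_filter, mem_univ, true_and] at hb
    rw [mem_coe, mem_powersetCard]
    refine ⟨erase_subset_erase p (subset_univ _), ?_⟩
    rw [card_erase_of_mem (by simp [hb.1]), hb.2, Nat.add_sub_cancel]
  · intro s hs
    rw [mem_coe, mem_powersetCard] at hs
    have hps : p ∉ s := fun h => by simpa using hs.1 h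
    have hones : ({j | decide (j = p ∨ j ∈ s) = true} : Finset α) = insert p s := by
      ext j; simp
    rw [mem_coe, mem_filter, hones, card_insert_of_notMem hps, hs.2]
    simp
  · intro b hb
    simp only [mem_coe, mem_filter, mem_univ, true_and] at hb
    funext j
    by_cases hj : j = p
    · simp [hj, hb.1]
    · simp [hj]
  · intro s hs
    rw [mem_coe, mem_powersetCard] at hs
    have hps : p ∉ s := fun h => by simpa using hs.1 h
    ext j
    by_cases hj : j = p <;> simp [hj, hps]

theorem mul_choose_eq_card_mul_card_apply_eq_true_and_card_eq (p : α) (i : ℕ) :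
    i * (Fintype.card α).choose i =
      Fintype.card α * #{b : α → Bool | b p = true ∧ #{j | b j = true} = i} := by
  obtain ⟨m, hm⟩ : ∃ m, Fintype.card α = m + 1 :=
    have : Nonempty α := ⟨p⟩
    Nat.exists_eq_succ_of_ne_zero Fintype.card_ne_zero
  cases i with
  | zero =>
    simp only [zero_mul, zero_eq_mul, card_eq_zero, filter_eq_empty_iff]
    exact Or.inr fun b _ ⟨hbp, hb⟩ => hb (mem_univ p) hbp
  | succ k =>
    rw [card_apply_eq_true_and_card_eq_succ, hm, Nat.add_sub_cancel, Nat.add_one_mul_choose_eq,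
      mul_comm]

theorem norm_one_div_sqrt_sq {x : ℝ} (hx : 0 ≤ x) : ‖(1 / Real.sqrt x : ℂ)‖ ^ 2 = 1 / x := by
  rw [norm_div, norm_one, Complex.norm_real, Real.norm_of_nonneg (Real.sqrt_nonneg x), div_pow,
    one_pow, Real.sq_sqrt hx]

theorem sum_apply_eq_true_norm_dickeState_sq (p : α) {i : ℕ} (hi : i ≤ Fintype.card α) :
    ∑ b with b p = true, ‖dickeState α i b‖ ^ 2 = i / Fintype.card α := by
  have hchoose : (0 : ℝ) < (Fintype.card α).choose i := by exact_mod_cast Nat.choose_pos hi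
  have hcard : (0 : ℝ) < Fintype.card α := by exact_mod_cast Fintype.card_pos_iff.mpr ⟨p⟩
  have hcount : (i : ℝ) * (Fintype.card α).choose i =
      Fintype.card α * #{b : α → Bool | b p = true ∧ #{j | b j = true} = i} := by
    exact_mod_cast mul_choose_eq_card_mul_card_apply_eq_true_and_card_eq p i
  simp only [dickeState, apply_ite (fun z : ℂ => ‖z‖ ^ 2), norm_one_div_sqrt_sq hchoose.le,
    norm_zero, ne_eq, OfNat.ofNat_ne_zero, not_false_eq_true, zero_pow]
  rw [← sum_filter, filter_filter, sum_const, nsmul_eq_mul, mul_one_div,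
    div_eq_div_iff hchoose.ne' hcard.ne', hcount, mul_comm]

end

theorem dicke_states_solve_dct_general
    (n i : ℕ) (hi : i ≤ n)
    (p : Fin n)
    (weight : (Fin n → Bool) → ℕ)
    (hweight : ∀ b, weight b = (Finset.univ.filter (fun j => b j = true)).card)
    (dicke : (Fin n → Bool) → ℂ)
    (hdicke : ∀ b, dicke b =
      if weight b = i then (1 / Real.sqrt (n.choose i) : ℂ) else 0) :
    (∑ b ∈ Finset.univ.filter (fun b : Fin n → Bool => b p = true),
        ‖dicke b‖ ^ 2) = (i : ℝ) / n
    ∧ (i < n / 2 →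
        (∑ b ∈ Finset.univ.filter (fun b : Fin n → Bool => b p = true),
          ‖dicke b‖ ^ 2) < 1 / 2)
    ∧ (n / 2 < i →
        (1 : ℝ) / 2 < ∑ b ∈ Finset.univ.filter (fun b : Fin n → Bool => b p = true),
          ‖dicke b‖ ^ 2) := by
  have hdicke_eq : dicke = dickeState (Fin n) i := funext fun b => by
    rw [hdicke, hweight, dickeState, Fintype.card_fin]
  have hprob := sum_apply_eq_true_norm_dickeState_sq p (hi.trans_eq (Fintype.card_fin n).symm)
  rw [Fintype.card_fin] at hprob
  have hn : (0 : ℝ) < n := by exact_mod_cast p.pos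
  rw [hdicke_eq, hprob]
  refine ⟨rfl, fun hlt => ?_, fun hgt => ?_⟩
  · rw [div_lt_div_iff₀ hn two_pos]
    exact_mod_cast (by omega : i * 2 < 1 * n)
  · rw [div_lt_div_iff₀ two_pos hn]
    exact_mod_cast (by omega : 1 * n < i * 2)

/-- **Dicke states solve the density classification task.**
For even `n > 2`, `i ≤ n`, `i ≠ n/2`, the Dicke state `|D_n^i⟩` (uniform superposition
of all computational basis states of `n` qubits with exactly `i` ones, with amplitude
`1/√(C(n,i))`) has probability exactly `i/n` of yielding outcome `1` when qubit `p`
is measured; hence this probability is `< 1/2` when `i < n/2` and `> 1/2` when `i > n/2`. -/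
theorem dicke_states_solve_dct
    (n i : ℕ) (hn : Even n) (hn2 : 2 < n) (hi : i ≤ n) (hne : i ≠ n / 2)
    (p : Fin n)
    (weight : (Fin n → Bool) → ℕ)
    (hweight : ∀ b, weight b = (Finset.univ.filter (fun j => b j = true)).card)
    (dicke : (Fin n → Bool) → ℂ)
    (hdicke : ∀ b, dicke b =
      if weight b = i then (1 / Real.sqrt (n.choose i) : ℂ) else 0) :
    (∑ b ∈ Finset.univ.filter (fun b : Fin n → Bool => b p = true),
        ‖dicke b‖ ^ 2) = (i : ℝ) / n
    ∧ (i < n / 2 →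
        (∑ b ∈ Finset.univ.filter (fun b : Fin n → Bool => b p = true),
          ‖dicke b‖ ^ 2) < 1 / 2)
    ∧ (n / 2 < i →
        (1 : ℝ) / 2 < ∑ b ∈ Finset.univ.filter (fun b : Fin n → Bool => b p = true),
          ‖dicke b‖ ^ 2) :=
  dicke_states_solve_dct_general n i hi p weight hweight dicke hdicke
end

section
/- Let A_e = I_{n/2} ⊗ [[a₁,b₁],[−b₁*,a₁*]] and A_o = X_n A X_n† with A = I_{n/2} ⊗ [[a₂,b₂],[−b₂*,a₂*]], where n is even and X_n is the cyclic shift. Then the product 𝔸 = A_o A_e is block-diagonalized by the Fourier transform: 𝔸^t = (F_{n/2} ⊗ I₂)[Σ_{k=0}^{n/2−1} |k⟩⟨k| ⊗ M(k)^t](F_{n/2}† ⊗ I₂), where M(k) = [[a₂* a₁ + b₂* b₁* e^{−4πik/n}, a₂* b₁ − b₂* a₁* e^{−4πik/n}],[a₁ b₂ e^{4πik/n} − a₂ b₁*, b₂ b₁ e^{4πik/n} + a₂ a₁*]]. -/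
/-!
Write site `j = 2s + p` of the ring of `n = 2m` sites as the pair `(s, p)`. The cyclic shift
`X_n` sends `(s, 0) ↦ (s, 1)` and `(s, 1) ↦ (s + 1, 0)`, so `X_n = I_m ⊗ |0⟩⟨1| + S ⊗ |1⟩⟨0|`
with `S` the cyclic shift on `m` sites. Since `F_m` diagonalizes `S` with eigenvalues
`ω^k = e^{2πik/m}`, the ⋆-automorphism `X ↦ U X U†`, `U = F_m ⊗ I₂`, maps the block-diagonal matrix
with blocks `Y_k = [[0, 1], [ω^k, 0]]` to `X_n`, and the one with constant blocks `B` to `I_m ⊗ B`.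
Hence `𝔸 = U (⊕_k Y_k B₂ Y_k† B₁) U†`, the block `Y_k B₂ Y_k† B₁` is `M(k)` because `|ω^k| = 1`,
and powers pass through both the conjugation and the block-diagonal embedding.
-/

open Matrix Kronecker

theorem IsPrimitiveRoot.sum_range_zpow_pow {K : Type*} [Field K] {ζ : K} {m : ℕ}
    (hζ : IsPrimitiveRoot ζ m) (d : ℤ) :
    ∑ k ∈ Finset.range m, (ζ ^ d) ^ k = if (m : ℤ) ∣ d then (m : K) else 0 := by
  split_ifs with hd
  · simp [(hζ.zpow_eq_one_iff_dvd d).2 hd]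
  · have hne : ζ ^ d ≠ 1 := mt (hζ.zpow_eq_one_iff_dvd d).1 hd
    rw [geom_sum_eq hne, ← zpow_natCast, ← _root_.zpow_mul, mul_comm, _root_.zpow_mul,
      zpow_natCast, hζ.pow_eq_one, _root_.one_zpow, sub_self, zero_div]

theorem Fin.add_mod_eq_iff_dvd {m : ℕ} (s s' : Fin m) (e : ℕ) :
    ((s : ℕ) + e) % m = s' ↔ (m : ℤ) ∣ (s : ℤ) + e - s' := by
  have hmod : ((s : ℕ) + e) % m = s' ↔ (s + e) ≡ s' [MOD m] := by
    rw [Nat.ModEq, Nat.mod_eq_of_lt s'.isLt]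
  rw [hmod, Nat.modEq_iff_dvd, dvd_sub_comm]
  push_cast
  rfl

section BlockDiagonalLeft

variable {ι κ R : Type*} [Fintype ι] [DecidableEq ι] [Fintype κ] [DecidableEq κ]

/-- Mathlib's `blockDiagonal` puts the block index in the second coordinate; here it comes first,
as in `I_m ⊗ B`. -/
def blockDiagonalLeft [Semiring R] : (ι → Matrix κ κ R) →+* Matrix (ι × κ) (ι × κ) R :=
  (reindexRingEquiv R (Equiv.prodComm κ ι)).toRingHom.comp (blockDiagonalRingHom κ ι R)

theorem blockDiagonalLeft_apply [Semiring R] (N : ι → Matrix κ κ R) (x y : ι × κ) :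
    blockDiagonalLeft N x y = if x.1 = y.1 then N x.1 x.2 y.2 else 0 := rfl

theorem conjTranspose_blockDiagonalLeft [Semiring R] [StarRing R] (N : ι → Matrix κ κ R) :
    (blockDiagonalLeft N)ᴴ = blockDiagonalLeft fun i => (N i)ᴴ := by
  ext x y
  simp only [conjTranspose_apply, blockDiagonalLeft_apply, eq_comm (a := y.1)]
  split_ifs with h
  · rw [h]
  · exact star_zero R

theorem diagonal_kronecker_eq_blockDiagonalLeft [Semiring R] (d : ι → R) (B : Matrix κ κ R) :
    diagonal d ⊗ₖ B = blockDiagonalLeft fun i => d i • B := by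
  ext x y
  simp [blockDiagonalLeft_apply, diagonal_apply]

end BlockDiagonalLeft

noncomputable def dftMatrix (m : ℕ) : Matrix (Fin m) (Fin m) ℂ :=
  of fun j k => Complex.exp (2 * Real.pi * Complex.I * (j : ℕ) * (k : ℕ) / m) / Real.sqrt m

section Dft

variable (m : ℕ) [NeZero m]

theorem dftMatrix_mul_diagonal_mul_conjTranspose (e : ℕ) :
    dftMatrix m
        * diagonal (fun k : Fin m => Complex.exp (2 * Real.pi * Complex.I * e * (k : ℕ) / m))
        * (dftMatrix m)ᴴ = of fun s s' : Fin m => if ((s : ℕ) + e) % m = s' then 1 else 0 := by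
  have hm : (m : ℂ) ≠ 0 := Nat.cast_ne_zero.2 (NeZero.ne m)
  set ζ := Complex.exp (2 * Real.pi * Complex.I / m)
  have hζ : IsPrimitiveRoot ζ m := Complex.isPrimitiveRoot_exp m (NeZero.ne m)
  have hsqrt : ((Real.sqrt m : ℝ) : ℂ) ^ 2 = m := by
    rw [← Complex.ofReal_pow, Real.sq_sqrt (Nat.cast_nonneg m), Complex.ofReal_natCast]
  ext s s'
  have hterm : ∀ k : Fin m, (dftMatrix m * diagonal (fun k : Fin m =>
      Complex.exp (2 * Real.pi * Complex.I * e * (k : ℕ) / m))) s k * (dftMatrix m)ᴴ k s'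
      = (ζ ^ ((s : ℤ) + e - s')) ^ (k : ℕ) / m := by
    intro k
    rw [mul_diagonal, conjTranspose_apply, dftMatrix, of_apply, of_apply, star_div₀,
      Complex.star_def, ← Complex.exp_conj, Complex.conj_ofReal, ← zpow_natCast,
      ← _root_.zpow_mul, ← Complex.exp_int_mul, div_mul_eq_mul_div, div_mul_div_comm,
      ← Complex.exp_add, ← Complex.exp_add, ← pow_two, hsqrt]
    congr 2
    simp only [map_mul, map_div₀, Complex.conj_ofReal, Complex.conj_I, map_natCast, map_ofNat]
    push_cast
    ring
  rw [mul_apply, Finset.sum_congr rfl fun k _ => hterm k, ← Finset.sum_div,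
    Fin.sum_univ_eq_sum_range (fun k => (ζ ^ ((s : ℤ) + e - s')) ^ k),
    hζ.sum_range_zpow_pow, of_apply]
  simp only [Fin.add_mod_eq_iff_dvd]
  split_ifs
  · exact div_self hm
  · exact zero_div _

theorem dftMatrix_mul_conjTranspose : dftMatrix m * (dftMatrix m)ᴴ = 1 := by
  have h := dftMatrix_mul_diagonal_mul_conjTranspose m 0
  simp only [Nat.cast_zero, mul_zero, zero_mul, zero_div, Complex.exp_zero, add_zero, diagonal_one,
    Matrix.mul_one] at h
  rw [h]
  ext s s'
  simp [one_apply, Nat.mod_eq_of_lt s.isLt, Fin.ext_iff]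

theorem dftMatrix_mem_unitary : dftMatrix m ∈ unitary (Matrix (Fin m) (Fin m) ℂ) := by
  have h := dftMatrix_mul_conjTranspose m
  rw [Unitary.mem_iff, star_eq_conjTranspose]
  exact ⟨mul_eq_one_comm.1 h, h⟩

variable (κ : Type*) [Fintype κ] [DecidableEq κ]

noncomputable def dftConj :
    Matrix (Fin m × κ) (Fin m × κ) ℂ ≃⋆ₐ[ℂ] Matrix (Fin m × κ) (Fin m × κ) ℂ :=
  Unitary.conjStarAlgAut ℂ _
    ⟨dftMatrix m ⊗ₖ 1, kronecker_mem_unitary (dftMatrix_mem_unitary m) (one_mem _)⟩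

theorem dftConj_apply (X : Matrix (Fin m × κ) (Fin m × κ) ℂ) :
    dftConj m κ X = (dftMatrix m ⊗ₖ 1) * X * ((dftMatrix m)ᴴ ⊗ₖ 1) := by
  rw [dftConj, Unitary.conjStarAlgAut_apply, star_eq_conjTranspose, conjTranspose_kronecker,
    conjTranspose_one]

theorem dftConj_diagonal_kronecker (d : Fin m → ℂ) (B : Matrix κ κ ℂ) :
    dftConj m κ (blockDiagonalLeft fun i => d i • B) =
      (dftMatrix m * diagonal d * (dftMatrix m)ᴴ) ⊗ₖ B := by
  rw [← diagonal_kronecker_eq_blockDiagonalLeft, dftConj_apply, ← mul_kronecker_mul,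
    ← mul_kronecker_mul, Matrix.one_mul, Matrix.mul_one]

theorem one_kronecker_eq_dftConj (B : Matrix κ κ ℂ) :
    1 ⊗ₖ B = dftConj m κ (blockDiagonalLeft fun _ => B) := by
  simpa [dftMatrix_mul_conjTranspose] using (dftConj_diagonal_kronecker m κ 1 B).symm

end Dft

noncomputable def cyclicShift (m : ℕ) : Matrix (Fin m × Fin 2) (Fin m × Fin 2) ℂ :=
  of fun j k => if (2 * (j.1 : ℕ) + j.2 + 1) % (2 * m) = 2 * (k.1 : ℕ) + k.2 then 1 else 0

theorem cyclicShift_eq_kronecker (m : ℕ) :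
    cyclicShift m = 1 ⊗ₖ !![0, 1; 0, 0]
      + (of fun i j : Fin m => if ((i : ℕ) + 1) % m = j then (1 : ℂ) else 0) ⊗ₖ !![0, 0; 1, 0] := by
  ext ⟨i, p⟩ ⟨j, q⟩
  have hi := i.isLt
  have hj := j.isLt
  have hdouble : 2 * (i : ℕ) + 1 + 1 = 2 * ((i : ℕ) + 1) := by ring
  fin_cases p <;> fin_cases q <;> simp [cyclicShift, one_apply, Fin.ext_iff]
  · rw [Nat.mod_eq_of_lt (by omega)]
    omega
  · rw [Nat.mod_eq_of_lt (by omega)]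
    exact if_congr (by omega) rfl rfl
  · rw [hdouble, Nat.mul_mod_mul_left]
    exact if_congr (by omega) rfl rfl
  · rw [hdouble, Nat.mul_mod_mul_left]
    omega

theorem cyclicShift_eq_dftConj (m : ℕ) [NeZero m] :
    cyclicShift m = dftConj m (Fin 2) (blockDiagonalLeft fun k : Fin m =>
      !![0, 1; Complex.exp (2 * Real.pi * Complex.I * (k : ℕ) / m), 0]) := by
  have hsplit : (fun k : Fin m => !![0, 1; Complex.exp (2 * Real.pi * Complex.I * (k : ℕ) / m), 0])
      = (fun k : Fin m => (1 : Fin m → ℂ) k • !![0, 1; 0, (0 : ℂ)])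
        + fun k : Fin m =>
          Complex.exp (2 * Real.pi * Complex.I * (1 : ℕ) * (k : ℕ) / m) • !![0, 0; 1, (0 : ℂ)] := by
    funext k
    ext i j
    fin_cases i <;> fin_cases j <;> simp
  rw [hsplit, map_add, map_add, dftConj_diagonal_kronecker, dftConj_diagonal_kronecker,
    Pi.one_def, diagonal_one, Matrix.mul_one, dftMatrix_mul_conjTranspose,
    dftMatrix_mul_diagonal_mul_conjTranspose, cyclicShift_eq_kronecker]

theorem phaseSwap_mul_mul_conjTranspose_mul (ζ a₁ b₁ a₂ b₂ : ℂ) (hζ : starRingEnd ℂ ζ * ζ = 1) :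
    !![0, 1; ζ, 0] * !![a₂, b₂; -(starRingEnd ℂ b₂), starRingEnd ℂ a₂] * (!![0, 1; ζ, 0])ᴴ
        * !![a₁, b₁; -(starRingEnd ℂ b₁), starRingEnd ℂ a₁] =
      !![starRingEnd ℂ a₂ * a₁ + starRingEnd ℂ b₂ * starRingEnd ℂ b₁ * starRingEnd ℂ ζ,
         starRingEnd ℂ a₂ * b₁ - starRingEnd ℂ b₂ * starRingEnd ℂ a₁ * starRingEnd ℂ ζ;
         a₁ * b₂ * ζ - a₂ * starRingEnd ℂ b₁, b₂ * b₁ * ζ + a₂ * starRingEnd ℂ a₁] := by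
  have hstar : (!![0, 1; ζ, 0])ᴴ = !![0, starRingEnd ℂ ζ; 1, 0] := by
    ext i j
    fin_cases i <;> fin_cases j <;> simp
  rw [hstar]
  simp only [mul_fin_two]
  ext i j
  fin_cases i <;> fin_cases j <;> simp
  · ring
  · ring
  · linear_combination (-(a₂ * starRingEnd ℂ b₁)) * hζ
  · linear_combination (a₂ * starRingEnd ℂ a₁) * hζ

theorem puqcaBlock_eq (m : ℕ) (k : Fin m) (a₁ b₁ a₂ b₂ : ℂ) :
    !![0, 1; Complex.exp (2 * Real.pi * Complex.I * (k : ℕ) / m), 0]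
        * !![a₂, b₂; -(starRingEnd ℂ b₂), starRingEnd ℂ a₂]
        * (!![0, 1; Complex.exp (2 * Real.pi * Complex.I * (k : ℕ) / m), 0])ᴴ
        * !![a₁, b₁; -(starRingEnd ℂ b₁), starRingEnd ℂ a₁] =
      !![starRingEnd ℂ a₂ * a₁ + starRingEnd ℂ b₂ * starRingEnd ℂ b₁
            * Complex.exp (-(4 * Real.pi * Complex.I * (k : ℕ)) / (2 * m)),
         starRingEnd ℂ a₂ * b₁ - starRingEnd ℂ b₂ * starRingEnd ℂ a₁
            * Complex.exp (-(4 * Real.pi * Complex.I * (k : ℕ)) / (2 * m));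
         a₁ * b₂ * Complex.exp (4 * Real.pi * Complex.I * (k : ℕ) / (2 * m))
            - a₂ * starRingEnd ℂ b₁,
         b₂ * b₁ * Complex.exp (4 * Real.pi * Complex.I * (k : ℕ) / (2 * m))
            + a₂ * starRingEnd ℂ a₁] := by
  set θ : ℂ := 2 * Real.pi * Complex.I * (k : ℕ) / m
  have hconj : starRingEnd ℂ θ = -θ := by
    simp only [θ, map_mul, map_div₀, Complex.conj_ofReal, Complex.conj_I, map_natCast, map_ofNat]
    ring
  have hθ : 4 * Real.pi * Complex.I * (k : ℕ) / (2 * m) = θ := by ring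
  have hstar : starRingEnd ℂ (Complex.exp θ) = Complex.exp (-θ) := by
    rw [← Complex.exp_conj, hconj]
  have hunit : starRingEnd ℂ (Complex.exp θ) * Complex.exp θ = 1 := by
    rw [hstar, ← Complex.exp_add, neg_add_cancel, Complex.exp_zero]
  rw [phaseSwap_mul_mul_conjTranspose_mul _ _ _ _ _ hunit, hstar, neg_div, hθ]

theorem fourier_block_diagonalization_of_puqca_general (m : ℕ) (a₁ b₁ a₂ b₂ : ℂ)
    (toNat : Fin m × Fin 2 → ℕ) (htoNat : ∀ j, toNat j = 2 * (j.1 : ℕ) + (j.2 : ℕ))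
    (Xn : Matrix (Fin m × Fin 2) (Fin m × Fin 2) ℂ)
    (hXn : ∀ j k, Xn j k = if (toNat j + 1) % (2 * m) = toNat k then 1 else 0)
    (Ae Ao A : Matrix (Fin m × Fin 2) (Fin m × Fin 2) ℂ)
    (hAe : Ae = (1 : Matrix (Fin m) (Fin m) ℂ)
        ⊗ₖ !![a₁, b₁; -(starRingEnd ℂ b₁), starRingEnd ℂ a₁])
    (hA : A = (1 : Matrix (Fin m) (Fin m) ℂ)
        ⊗ₖ !![a₂, b₂; -(starRingEnd ℂ b₂), starRingEnd ℂ a₂])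
    (hAo : Ao = Xn * A * Xnᴴ)
    (F : Matrix (Fin m) (Fin m) ℂ)
    (hF : ∀ j k, F j k =
      Complex.exp (2 * Real.pi * Complex.I * (j : ℕ) * (k : ℕ) / m) / Real.sqrt m)
    (M : Fin m → Matrix (Fin 2) (Fin 2) ℂ)
    (hM : ∀ k, M k =
      !![starRingEnd ℂ a₂ * a₁ + starRingEnd ℂ b₂ * starRingEnd ℂ b₁
            * Complex.exp (-(4 * Real.pi * Complex.I * (k : ℕ)) / (2 * m)),
         starRingEnd ℂ a₂ * b₁ - starRingEnd ℂ b₂ * starRingEnd ℂ a₁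
            * Complex.exp (-(4 * Real.pi * Complex.I * (k : ℕ)) / (2 * m));
         a₁ * b₂ * Complex.exp (4 * Real.pi * Complex.I * (k : ℕ) / (2 * m))
            - a₂ * starRingEnd ℂ b₁,
         b₂ * b₁ * Complex.exp (4 * Real.pi * Complex.I * (k : ℕ) / (2 * m))
            + a₂ * starRingEnd ℂ a₁])
    (t : ℕ) :
    (Ao * Ae) ^ t
      = (F ⊗ₖ (1 : Matrix (Fin 2) (Fin 2) ℂ))
        * (Matrix.of fun (x y : Fin m × Fin 2) =>
            if x.1 = y.1 then ((M x.1) ^ t) x.2 y.2 else 0)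
        * (Fᴴ ⊗ₖ (1 : Matrix (Fin 2) (Fin 2) ℂ)) := by
  rcases Nat.eq_zero_or_pos m with rfl | hm
  · exact Subsingleton.elim _ _
  have : NeZero m := ⟨hm.ne'⟩
  obtain rfl : F = dftMatrix m := Matrix.ext hF
  obtain rfl : Xn = cyclicShift m := Matrix.ext fun j k => by rw [hXn, htoNat, htoNat]; rfl
  have hstep : Ao * Ae = dftConj m (Fin 2) (blockDiagonalLeft M) := by
    rw [hAo, hAe, hA, cyclicShift_eq_dftConj m, one_kronecker_eq_dftConj,
      one_kronecker_eq_dftConj, ← star_eq_conjTranspose, ← map_star, ← map_mul, ← map_mul,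
      ← map_mul]
    rw [star_eq_conjTranspose, conjTranspose_blockDiagonalLeft, ← map_mul, ← map_mul, ← map_mul]
    congr 2
    funext k
    exact ((hM k).trans (puqcaBlock_eq m k a₁ b₁ a₂ b₂).symm).symm
  rw [hstep, ← map_pow, ← map_pow, dftConj_apply]
  rfl

/-- **Fourier block-diagonalization of the fermionic PUQCA step.**
Let `A_e = I_m ⊗ B₁`, `A = I_m ⊗ B₂` with `B_j = [[a_j,b_j],[-b_j*,a_j*]]` unitary,
`A_o = X_n A X_n†` with `X_n` the cyclic shift on `n = 2m` sites (index `j = 2s+p`),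
and `𝔸 = A_o A_e`.  Then with `F_m` the discrete Fourier matrix,
`𝔸^t = (F_m ⊗ I₂) [Σ_k |k⟩⟨k| ⊗ M(k)^t] (F_m† ⊗ I₂)` where
`M(k) = [[a₂*a₁ + b₂*b₁*e^{-4πik/n}, a₂*b₁ - b₂*a₁*e^{-4πik/n}],
[a₁b₂e^{4πik/n} - a₂b₁*, b₂b₁e^{4πik/n} + a₂a₁*]]`. -/
theorem fourier_block_diagonalization_of_puqca (m : ℕ) (a₁ b₁ a₂ b₂ : ℂ)
    (hunit₁ : ‖a₁‖ ^ 2 + ‖b₁‖ ^ 2 = 1) (hunit₂ : ‖a₂‖ ^ 2 + ‖b₂‖ ^ 2 = 1)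
    (toNat : Fin m × Fin 2 → ℕ) (htoNat : ∀ j, toNat j = 2 * (j.1 : ℕ) + (j.2 : ℕ))
    (Xn : Matrix (Fin m × Fin 2) (Fin m × Fin 2) ℂ)
    (hXn : ∀ j k, Xn j k = if (toNat j + 1) % (2 * m) = toNat k then 1 else 0)
    (Ae Ao A : Matrix (Fin m × Fin 2) (Fin m × Fin 2) ℂ)
    (hAe : Ae = (1 : Matrix (Fin m) (Fin m) ℂ)
        ⊗ₖ !![a₁, b₁; -(starRingEnd ℂ b₁), starRingEnd ℂ a₁])
    (hA : A = (1 : Matrix (Fin m) (Fin m) ℂ)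
        ⊗ₖ !![a₂, b₂; -(starRingEnd ℂ b₂), starRingEnd ℂ a₂])
    (hAo : Ao = Xn * A * Xnᴴ)
    (F : Matrix (Fin m) (Fin m) ℂ)
    (hF : ∀ j k, F j k =
      Complex.exp (2 * Real.pi * Complex.I * (j : ℕ) * (k : ℕ) / m) / Real.sqrt m)
    (M : Fin m → Matrix (Fin 2) (Fin 2) ℂ)
    (hM : ∀ k, M k =
      !![starRingEnd ℂ a₂ * a₁ + starRingEnd ℂ b₂ * starRingEnd ℂ b₁
            * Complex.exp (-(4 * Real.pi * Complex.I * (k : ℕ)) / (2 * m)),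
         starRingEnd ℂ a₂ * b₁ - starRingEnd ℂ b₂ * starRingEnd ℂ a₁
            * Complex.exp (-(4 * Real.pi * Complex.I * (k : ℕ)) / (2 * m));
         a₁ * b₂ * Complex.exp (4 * Real.pi * Complex.I * (k : ℕ) / (2 * m))
            - a₂ * starRingEnd ℂ b₁,
         b₂ * b₁ * Complex.exp (4 * Real.pi * Complex.I * (k : ℕ) / (2 * m))
            + a₂ * starRingEnd ℂ a₁])
    (t : ℕ) :
    (Ao * Ae) ^ t
      = (F ⊗ₖ (1 : Matrix (Fin 2) (Fin 2) ℂ))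
        * (Matrix.of fun (x y : Fin m × Fin 2) =>
            if x.1 = y.1 then ((M x.1) ^ t) x.2 y.2 else 0)
        * (Fᴴ ⊗ₖ (1 : Matrix (Fin 2) (Fin 2) ℂ)) :=
  fourier_block_diagonalization_of_puqca_general m a₁ b₁ a₂ b₂ toNat htoNat Xn hXn Ae Ao A hAe hA
    hAo F hF M hM t
end
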